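/- Let μᵣ, μₛ be probability measures on Ω, f a labeling function, and h₁, h₂ hypotheses with disagreement sets Ω₁ = {x : h₁(x) ≠ h₂(x) ∧ h₁(x) ≠ f(x)} and Ω₂ = {x : h₁(x) ≠ h₂(x) ∧ h₂(x) ≠ f(x)}. Then |Δεᵣ − Δεₛ| ≤ |μᵣ − μₛ|(Ω₁ ∪ Ω₂) ≤ |μᵣ − μₛ|({x : h₁(x) ≠ h₂(x)}). -/

import Mathlib

/-! Points where both hypotheses err, or neither does, contribute equally to both risks, so the
risk difference `ν B - ν A` of `ν = μr - μs` only sees the symmetric difference of the error sets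
`A ∆ B`, on which it is bounded by `|ν|`; and `A ∆ B` lies inside the disagreement region. -/

open MeasureTheory Set
open scoped symmDiff

namespace MeasureTheory.SignedMeasure

variable {α : Type*} [MeasurableSpace α]

theorem apply_sub_apply_eq_apply_sdiff_sub_apply_sdiff (s : SignedMeasure α) {A B : Set α}
    (hA : MeasurableSet A) (hB : MeasurableSet B) :
    s B - s A = s (B \ A) - s (A \ B) := by
  have hBA : s (B \ A) = s B - s (B ∩ A) := by
    rw [← sdiff_self_inter, VectorMeasure.of_sdiff (hB.inter hA) hB inter_subset_left]
  have hAB : s (A \ B) = s A - s (A ∩ B) := by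
    rw [← sdiff_self_inter, VectorMeasure.of_sdiff (hA.inter hB) hA inter_subset_left]
  rw [hBA, hAB, inter_comm]
  ring

theorem abs_apply_sub_apply_le_totalVariation_symmDiff (s : SignedMeasure α) {A B : Set α}
    (hA : MeasurableSet A) (hB : MeasurableSet B) :
    |s B - s A| ≤ s.totalVariation.real (A ∆ B) :=
  calc |s B - s A| = |s (B \ A) - s (A \ B)| := by
        rw [s.apply_sub_apply_eq_apply_sdiff_sub_apply_sdiff hA hB]
    _ ≤ |s (B \ A)| + |s (A \ B)| := abs_sub _ _
    _ ≤ s.totalVariation.real (B \ A) + s.totalVariation.real (A \ B) :=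
        add_le_add (s.norm_le_totalVariation _) (s.norm_le_totalVariation _)
    _ = s.totalVariation.real (A ∆ B) := by
        rw [← measureReal_union disjoint_sdiff_sdiff (hA.diff hB), symmDiff_def, sup_comm]
        rfl

end MeasureTheory.SignedMeasure

theorem symmDiff_setOf_ne_subset {Ω Y : Type*} (f h₁ h₂ : Ω → Y) :
    {x | h₁ x ≠ f x} ∆ {x | h₂ x ≠ f x} ⊆
      {x | h₁ x ≠ h₂ x ∧ h₁ x ≠ f x} ∪ {x | h₁ x ≠ h₂ x ∧ h₂ x ≠ f x} := by
  intro x hx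
  simp only [Set.mem_symmDiff, mem_ofPred_eq, not_not] at hx
  grind

theorem risk_diff_gap_bounds_general {Ω Y : Type*} [MeasurableSpace Ω]
    (μr μs : Measure Ω) [IsProbabilityMeasure μr] [IsProbabilityMeasure μs]
    (f h₁ h₂ : Ω → Y)
    (hm1 : MeasurableSet {x | h₁ x ≠ f x})
    (hm2 : MeasurableSet {x | h₂ x ≠ f x}) :
    |((μr {x | h₂ x ≠ f x}).toReal - (μr {x | h₁ x ≠ f x}).toReal) -
        ((μs {x | h₂ x ≠ f x}).toReal - (μs {x | h₁ x ≠ f x}).toReal)| ≤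
      ((μr.toSignedMeasure - μs.toSignedMeasure).totalVariation
        ({x | h₁ x ≠ h₂ x ∧ h₁ x ≠ f x} ∪ {x | h₁ x ≠ h₂ x ∧ h₂ x ≠ f x})).toReal ∧
    ((μr.toSignedMeasure - μs.toSignedMeasure).totalVariation
        ({x | h₁ x ≠ h₂ x ∧ h₁ x ≠ f x} ∪ {x | h₁ x ≠ h₂ x ∧ h₂ x ≠ f x})).toReal ≤
      ((μr.toSignedMeasure - μs.toSignedMeasure).totalVariation {x | h₁ x ≠ h₂ x}).toReal := by
  set ν := μr.toSignedMeasure - μs.toSignedMeasure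
  have hgap : ((μr {x | h₂ x ≠ f x}).toReal - (μr {x | h₁ x ≠ f x}).toReal) -
      ((μs {x | h₂ x ≠ f x}).toReal - (μs {x | h₁ x ≠ f x}).toReal) =
      ν {x | h₂ x ≠ f x} - ν {x | h₁ x ≠ f x} := by
    rw [Measure.toSignedMeasure_sub_apply hm2, Measure.toSignedMeasure_sub_apply hm1]
    simp only [measureReal_def]
    ring
  refine ⟨?_, measureReal_mono (union_subset (fun _ hx => hx.1) (fun _ hx => hx.1))⟩
  rw [hgap]
  exact (ν.abs_apply_sub_apply_le_totalVariation_symmDiff hm1 hm2).trans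
    (measureReal_mono (symmDiff_setOf_ne_subset f h₁ h₂))

theorem risk_diff_gap_bounds {Ω Y : Type*} [MeasurableSpace Ω]
    (μr μs : Measure Ω) [IsProbabilityMeasure μr] [IsProbabilityMeasure μs]
    (f h₁ h₂ : Ω → Y)
    (hm1 : MeasurableSet {x | h₁ x ≠ f x})
    (hm2 : MeasurableSet {x | h₂ x ≠ f x})
    (hm12 : MeasurableSet {x | h₁ x ≠ h₂ x}) :
    |((μr {x | h₂ x ≠ f x}).toReal - (μr {x | h₁ x ≠ f x}).toReal) -
        ((μs {x | h₂ x ≠ f x}).toReal - (μs {x | h₁ x ≠ f x}).toReal)| ≤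
      ((μr.toSignedMeasure - μs.toSignedMeasure).totalVariation
        ({x | h₁ x ≠ h₂ x ∧ h₁ x ≠ f x} ∪ {x | h₁ x ≠ h₂ x ∧ h₂ x ≠ f x})).toReal ∧
    ((μr.toSignedMeasure - μs.toSignedMeasure).totalVariation
        ({x | h₁ x ≠ h₂ x ∧ h₁ x ≠ f x} ∪ {x | h₁ x ≠ h₂ x ∧ h₂ x ≠ f x})).toReal ≤
      ((μr.toSignedMeasure - μs.toSignedMeasure).totalVariation {x | h₁ x ≠ h₂ x}).toReal :=
  risk_diff_gap_bounds_general μr μs f h₁ h₂ hm1 hm2
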